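/- Let $\Omega\subset\mathbb{R}^d$ be a bounded Lipschitz domain and $\ell$ satisfy the standing hypotheses (l.s.c., $\ell(0)>0$, finite non-increasing on $[r_0,\infty)$, vanishing at infinity, $\int_{r_0}^\infty\ell(t)t^{d-1}dt<\infty$). Define $F_\varepsilon$ on nonnegative measures by $F_\varepsilon(\rho)=\varepsilon^d\,\xi_\ell(S/\varepsilon)$ if $\rho=\varepsilon^d\sum_{x\in S}\delta_x$ for some finite $S\subset\overline\Omega$, and $+\infty$ otherwise. Then for every $a\in[0,r_0^{-d}]$ there exist finite sets $S_\varepsilon\subset\overline\Omega$ (intersections of $\Omega$ with scaled cubic lattices) such that $\rho_\varepsilon=\varepsilon^d\sum_{x\in S_\varepsilon}\delta_x\stackrel{*}{\rightharpoonup}a\,\mathcal{L}^d\llcorner\Omega$ and $\limsup_{\varepsilon\to0}F_\varepsilon(\rho_\varepsilon)\le a\,\Lambda_\ell(a^{-1/d})\,|\Omega|<\infty$. -/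

import Mathlib

set_option maxHeartbeats 1000000

open scoped ENNReal BigOperators Classical
open Filter MeasureTheory Set

noncomputable section

/-- The interaction energy of a finite point configuration. -/
def xi {d : ℕ} (ℓ : ℝ → ℝ≥0∞) (S : Finset (EuclideanSpace ℝ (Fin d))) : ℝ≥0∞ :=
  ∑ x ∈ S, ∑ y ∈ S, if x ≠ y then ℓ (dist x y) else 0

/-- The Epstein zeta function of the cubic lattice `ℤ^d`. -/
def LamZ (d : ℕ) (ℓ : ℝ → ℝ≥0∞) (r : ℝ) : ℝ≥0∞ :=
  ∑' z : {z : Fin d → ℤ // z ≠ 0},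
    ℓ (r * ‖(WithLp.equiv 2 (Fin d → ℝ)).symm (fun i => (((z : Fin d → ℤ)) i : ℝ))‖)

namespace RecAux

open Bornology

variable {d : ℕ}

/-- The integer vector `z` as a point of Euclidean space. -/
def vecZ (d : ℕ) (z : Fin d → ℤ) : EuclideanSpace ℝ (Fin d) :=
  (WithLp.equiv 2 (Fin d → ℝ)).symm (fun i => (z i : ℝ))

/-- The scaled lattice point `r • z`. -/
def ptL (d : ℕ) (r : ℝ) (z : Fin d → ℤ) : EuclideanSpace ℝ (Fin d) := r • vecZ d z

lemma vecZ_apply (z : Fin d → ℤ) (i : Fin d) : vecZ d z i = (z i : ℝ) := rfl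

lemma ptL_apply (r : ℝ) (z : Fin d → ℤ) (i : Fin d) : ptL d r z i = r * (z i : ℝ) := rfl

lemma vecZ_sub (z w : Fin d → ℤ) : vecZ d (z - w) = vecZ d z - vecZ d w := by
  simp only [vecZ, WithLp.equiv_symm_apply, ← WithLp.toLp_sub]
  congr 1
  funext i
  push_cast
  simp

lemma ptL_injective {r : ℝ} (hr : r ≠ 0) : Function.Injective (ptL d r) := by
  intro z w h
  funext i
  have := congrArg (fun x : EuclideanSpace ℝ (Fin d) => x i) h
  simp only [ptL_apply] at this
  exact_mod_cast mul_left_cancel₀ hr this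

lemma dist_ptL (r : ℝ) (z w : Fin d → ℤ) :
    dist (ptL d r z) (ptL d r w) = |r| * ‖vecZ d (z - w)‖ := by
  rw [dist_eq_norm, ptL, ptL, ← smul_sub, ← vecZ_sub, norm_smul, Real.norm_eq_abs]

lemma abs_coord_le_norm (x : EuclideanSpace ℝ (Fin d)) (i : Fin d) : |x i| ≤ ‖x‖ := by
  rw [EuclideanSpace.norm_eq]
  have h1 : |x i| = Real.sqrt (‖x i‖ ^ 2) := by
    rw [Real.sqrt_sq_eq_abs]; simp [Real.norm_eq_abs, sq_abs]
  rw [h1]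
  apply Real.sqrt_le_sqrt
  exact Finset.single_le_sum (f := fun j => ‖x j‖ ^ 2) (fun j _ => sq_nonneg _)
    (Finset.mem_univ i)


/-- The half-open cube with lower corner `r • z` and side `r`. -/
def cube (d : ℕ) (r : ℝ) (z : Fin d → ℤ) : Set (EuclideanSpace ℝ (Fin d)) :=
  {x | ∀ i, r * z i ≤ x i ∧ x i < r * (z i + 1)}

lemma mem_cube_iff_floor {r : ℝ} (hr : 0 < r) (x : EuclideanSpace ℝ (Fin d))
    (z : Fin d → ℤ) : x ∈ cube d r z ↔ ∀ i, ⌊x i / r⌋ = z i := by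
  unfold cube
  simp only [Set.mem_setOf_eq]
  refine forall_congr' fun i => ?_
  rw [Int.floor_eq_iff]
  constructor
  · rintro ⟨h1, h2⟩
    exact ⟨(le_div_iff₀ hr).2 (by linarith), (div_lt_iff₀ hr).2 (by linarith)⟩
  · rintro ⟨h1, h2⟩
    have := (le_div_iff₀ hr).1 h1
    have := (div_lt_iff₀ hr).1 h2
    constructor <;> linarith

lemma mem_cube_floor {r : ℝ} (hr : 0 < r) (x : EuclideanSpace ℝ (Fin d)) :
    x ∈ cube d r (fun i => ⌊x i / r⌋) := (mem_cube_iff_floor hr x _).2 fun i => rfl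

lemma cube_disjoint {r : ℝ} (hr : 0 < r) {z w : Fin d → ℤ} (h : z ≠ w) :
    Disjoint (cube d r z) (cube d r w) := by
  rw [Set.disjoint_left]
  intro x hx hx'
  exact h (funext fun i => ((mem_cube_iff_floor hr x z).1 hx i).symm.trans
    ((mem_cube_iff_floor hr x w).1 hx' i))

lemma cube_eq_preimage (r : ℝ) (z : Fin d → ℤ) :
    cube d r z = ((MeasurableEquiv.toLp 2 (Fin d → ℝ)).symm) ⁻¹'
      (Set.univ.pi fun i => Set.Ico (r * z i) (r * (z i + 1))) := by
  ext x
  simp [cube, Set.mem_pi]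

lemma measurableSet_cube (r : ℝ) (z : Fin d → ℤ) : MeasurableSet (cube d r z) := by
  rw [cube_eq_preimage]
  exact (MeasurableSet.univ_pi fun i => measurableSet_Ico).preimage
    (MeasurableEquiv.measurable _)

lemma volume_cube {r : ℝ} (hr : 0 < r) (z : Fin d → ℤ) :
    volume (cube d r z) = ENNReal.ofReal (r ^ d) := by
  rw [cube_eq_preimage]
  rw [(EuclideanSpace.volume_preserving_symm_measurableEquiv_toLp (Fin d)).measure_preimage
    ((MeasurableSet.univ_pi fun i => measurableSet_Ico).nullMeasurableSet)]
  rw [volume_pi_pi]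
  have : ∀ i : Fin d, volume (Set.Ico (r * (z i : ℝ)) (r * (z i + 1))) = ENNReal.ofReal r := by
    intro i
    rw [Real.volume_Ico]
    ring_nf
  simp only [this, Finset.prod_const, Finset.card_univ, Fintype.card_fin]
  rw [← ENNReal.ofReal_pow hr.le]

lemma dist_le_of_mem_cube {r : ℝ} (hr : 0 < r) {x : EuclideanSpace ℝ (Fin d)}
    {z : Fin d → ℤ} (hx : x ∈ cube d r z) :
    dist x (ptL d r z) ≤ r * Real.sqrt d := by
  rw [EuclideanSpace.dist_eq]
  have h1 : ∀ i, dist (x i) (ptL d r z i) ^ 2 ≤ r ^ 2 := by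
    intro i
    obtain ⟨h2, h3⟩ := hx i
    rw [ptL_apply, Real.dist_eq, sq_abs]
    nlinarith [h2, h3]
  calc Real.sqrt (∑ i, dist (x i) (ptL d r z i) ^ 2)
      ≤ Real.sqrt (∑ _i : Fin d, r ^ 2) :=
        Real.sqrt_le_sqrt (Finset.sum_le_sum fun i _ => h1 i)
    _ = r * Real.sqrt d := by
        rw [Finset.sum_const, Finset.card_univ, Fintype.card_fin, nsmul_eq_mul,
          Real.sqrt_mul (by positivity), Real.sqrt_sq hr.le]
        ring


lemma latt_finite {Ω : Set (EuclideanSpace ℝ (Fin d))} (hΩbd : IsBounded Ω) (r : ℝ) :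
    {z : Fin d → ℤ | 0 < r ∧ ptL d r z ∈ Ω}.Finite := by
  rcases le_or_gt r 0 with hr | hr
  · convert Set.finite_empty
    ext z; simp only [Set.mem_setOf_eq, Set.mem_empty_iff_false, iff_false, not_and]
    intro h; exact absurd h (not_lt.2 hr)
  · obtain ⟨R, hR⟩ := hΩbd.subset_closedBall 0
    set N : ℕ := ⌈R / r⌉₊ with hN
    apply Set.Finite.subset
      (Set.finite_coe_iff.1 (inferInstance :
        Finite ((Fintype.piFinset fun _ : Fin d => Finset.Icc (-(N:ℤ)) N : Finset (Fin d → ℤ)) : Set (Fin d → ℤ))))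
    rintro z ⟨-, hz⟩
    simp only [Finset.coe_sort_coe, Finset.mem_coe, Fintype.mem_piFinset, Finset.mem_Icc]
    intro i
    have h1 : |r * (z i : ℝ)| ≤ R := by
      have := abs_coord_le_norm (ptL d r z) i
      rw [ptL_apply] at this
      have h2 : ‖ptL d r z‖ ≤ R := by
        have := hR hz; rwa [Metric.mem_closedBall, dist_zero_right] at this
      linarith
    have h3 : |(z i : ℝ)| ≤ R / r := by
      rw [abs_mul, abs_of_pos hr] at h1
      rw [le_div_iff₀ hr]; linarith
    have h4 : |(z i : ℝ)| ≤ (N : ℝ) := h3.trans (Nat.le_ceil _)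
    rw [abs_le] at h4
    constructor
    · exact_mod_cast h4.1
    · exact_mod_cast h4.2

/-- The finset of lattice indices whose scaled point lies in `Ω` (empty if `r ≤ 0`). -/
def lattF {Ω : Set (EuclideanSpace ℝ (Fin d))} (hΩbd : IsBounded Ω) (r : ℝ) :
    Finset (Fin d → ℤ) := (latt_finite hΩbd r).toFinset

lemma mem_lattF {Ω : Set (EuclideanSpace ℝ (Fin d))} (hΩbd : IsBounded Ω) (r : ℝ)
    (z : Fin d → ℤ) : z ∈ lattF hΩbd r ↔ 0 < r ∧ ptL d r z ∈ Ω := by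
  simp [lattF, Set.Finite.mem_toFinset]


lemma vol_bounded_lt_top {s : Set (EuclideanSpace ℝ (Fin d))} (h : IsBounded s) :
    volume s < ⊤ :=
  lt_of_le_of_lt (measure_mono subset_closure)
    (Metric.isCompact_of_isClosed_isBounded isClosed_closure h.closure).measure_lt_top

lemma mem_closure_of_cthickening {s : Set (EuclideanSpace ℝ (Fin d))}
    {x : EuclideanSpace ℝ (Fin d)}
    (h : ∀ n : ℕ, x ∈ Metric.cthickening (1 / (n + 1)) s) : x ∈ closure s := by
  rw [Metric.closure_eq_iInter_cthickening]
  refine Set.mem_iInter₂.2 fun δ hδ => ?_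
  obtain ⟨n, hn⟩ := exists_nat_one_div_lt hδ
  exact Metric.cthickening_mono hn.le s (h n)

lemma bad_small {Ω : Set (EuclideanSpace ℝ (Fin d))} (hΩopen : IsOpen Ω)
    (hΩbd : IsBounded Ω) (hΩfr : volume (frontier Ω) = 0) {θ : ℝ≥0∞} (hθ : 0 < θ) :
    ∃ δ₀ > (0:ℝ), volume (Metric.cthickening δ₀ Ω \ Ω) < θ ∧
      volume (Ω ∩ Metric.cthickening δ₀ Ωᶜ) < θ := by
  set A : ℕ → Set (EuclideanSpace ℝ (Fin d)) := fun n =>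
    (Metric.cthickening (1 / (n + 1)) Ω \ Ω) ∪ (Ω ∩ Metric.cthickening (1 / (n + 1)) Ωᶜ)
    with hA
  have hmono : Antitone A := by
    intro n m hnm
    have hδ : (1:ℝ) / (m + 1) ≤ 1 / (n + 1) := by
      apply one_div_le_one_div_of_le (by positivity)
      exact_mod_cast Nat.add_le_add_right hnm 1
    exact Set.union_subset_union
      (Set.diff_subset_diff_left (Metric.cthickening_mono hδ _))
      (Set.inter_subset_inter_right _ (Metric.cthickening_mono hδ _))
  have hmeas : ∀ n, NullMeasurableSet (A n) volume := fun n =>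
    (((Metric.isClosed_cthickening.measurableSet.diff hΩopen.measurableSet).union
      (hΩopen.measurableSet.inter Metric.isClosed_cthickening.measurableSet))).nullMeasurableSet
  have hfin : volume (A 0) ≠ ⊤ := by
    refine (lt_of_le_of_lt (measure_mono ?_) (vol_bounded_lt_top
      ((hΩbd.cthickening (δ := 1)).union hΩbd))).ne
    intro x hx
    rcases hx with h | h
    · exact Or.inl (Metric.cthickening_mono (by norm_num) _ h.1)
    · exact Or.inr h.1
  have hInter : (⋂ n, A n) ⊆ frontier Ω := by
    intro x hx
    rw [Set.mem_iInter] at hx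
    by_cases hxΩ : x ∈ Ω
    · have h1 : ∀ n : ℕ, x ∈ Metric.cthickening (1 / (n + 1)) Ωᶜ := by
        intro n
        rcases hx n with h | h
        · exact absurd hxΩ h.2
        · exact h.2
      have h2 : x ∈ closure Ωᶜ := mem_closure_of_cthickening h1
      rw [closure_compl] at h2
      exact ⟨subset_closure hxΩ, h2⟩
    · have h1 : ∀ n : ℕ, x ∈ Metric.cthickening (1 / (n + 1)) Ω := by
        intro n
        rcases hx n with h | h
        · exact h.1
        · exact absurd h.1 hxΩ
      refine ⟨mem_closure_of_cthickening h1, ?_⟩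
      rw [hΩopen.interior_eq]; exact hxΩ
  have htend : Tendsto (fun n => volume (A n)) atTop (nhds (volume (⋂ n, A n))) :=
    tendsto_measure_iInter_atTop hmeas hmono ⟨0, hfin⟩
  have hzero : volume (⋂ n, A n) = 0 :=
    le_antisymm (hΩfr ▸ measure_mono hInter) zero_le
  rw [hzero] at htend
  have hev : ∀ᶠ n : ℕ in atTop, volume (A n) < θ :=
    htend.eventually_lt_const hθ
  obtain ⟨n, hn⟩ := hev.exists
  refine ⟨1 / (n + 1), by positivity, ?_, ?_⟩
  · exact lt_of_le_of_lt (measure_mono Set.subset_union_left) hn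
  · exact lt_of_le_of_lt (measure_mono Set.subset_union_right) hn

lemma riemann {Ω : Set (EuclideanSpace ℝ (Fin d))} (hΩopen : IsOpen Ω)
    (hΩbd : IsBounded Ω) (hΩfr : volume (frontier Ω) = 0)
    (φ : EuclideanSpace ℝ (Fin d) → ℝ) (hφ : Continuous φ) :
    Tendsto (fun r : ℝ => r ^ d * ∑ z ∈ lattF hΩbd r, φ (ptL d r z))
      (nhdsWithin 0 (Set.Ioi 0)) (nhds (∫ x in Ω, φ x)) := by
  classical
  set K : Set (EuclideanSpace ℝ (Fin d)) := Metric.cthickening 1 (closure Ω) with hK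
  have hKcpt : IsCompact K :=
    Metric.isCompact_of_isClosed_isBounded Metric.isClosed_cthickening
      (hΩbd.closure.cthickening)
  have hΩK : Ω ⊆ K := subset_closure.trans (Metric.self_subset_cthickening _)
  have hKvol : volume K ≠ ⊤ := hKcpt.measure_lt_top.ne
  have hφK : IntegrableOn φ K := hφ.continuousOn.integrableOn_compact hKcpt
  obtain ⟨M₀, hM₀⟩ := hKcpt.exists_bound_of_continuousOn hφ.continuousOn
  set M : ℝ := max M₀ 0 with hMdef
  have hM : ∀ x ∈ K, |φ x| ≤ M := fun x hx => (hM₀ x hx).trans (le_max_left _ _)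
  have hMpos : 0 ≤ M := le_max_right _ _
  set U : ℝ → Set (EuclideanSpace ℝ (Fin d)) := fun r => ⋃ z ∈ lattF hΩbd r, cube d r z with hU
  -- basic facts for admissible r
  have cubeK : ∀ r : ℝ, 0 < r → r * Real.sqrt d ≤ 1 → ∀ z ∈ lattF hΩbd r,
      cube d r z ⊆ K := by
    intro r hr hr1 z hz x hx
    have h1 := dist_le_of_mem_cube hr hx
    have h2 : ptL d r z ∈ closure Ω := subset_closure ((mem_lattF hΩbd r z).1 hz).2
    exact Metric.mem_cthickening_of_dist_le x _ 1 _ h2 (h1.trans hr1)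
  have hUK : ∀ r : ℝ, 0 < r → r * Real.sqrt d ≤ 1 → U r ⊆ K := by
    intro r hr hr1
    exact Set.iUnion₂_subset fun z hz => cubeK r hr hr1 z hz
  have hUmeas : ∀ r : ℝ, MeasurableSet (U r) :=
    fun r => (lattF hΩbd r).measurableSet_biUnion fun z _ => measurableSet_cube r z
  have hdisj : ∀ r : ℝ, 0 < r → ((lattF hΩbd r : Set (Fin d → ℤ))).PairwiseDisjoint
      (cube d r) := fun r hr z _ w _ hzw => cube_disjoint hr hzw
  have hUvol : ∀ r : ℝ, 0 < r →
      volume (U r) = (lattF hΩbd r).card • ENNReal.ofReal (r ^ d) := by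
    intro r hr
    rw [hU]
    rw [measure_biUnion_finset (hdisj r hr) fun z _ => measurableSet_cube r z]
    simp [volume_cube hr]
  have hcard : ∀ r : ℝ, 0 < r → r * Real.sqrt d ≤ 1 →
      ((lattF hΩbd r).card : ℝ) * r ^ d ≤ (volume K).toReal := by
    intro r hr hr1
    have h1 : volume (U r) ≤ volume K := measure_mono (hUK r hr hr1)
    rw [hUvol r hr] at h1
    have h2 : ENNReal.ofReal (((lattF hΩbd r).card : ℝ) * r ^ d) ≤ volume K := by
      rw [ENNReal.ofReal_mul (by positivity), ENNReal.ofReal_natCast]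
      simpa using h1
    calc ((lattF hΩbd r).card : ℝ) * r ^ d
        = (ENNReal.ofReal (((lattF hΩbd r).card : ℝ) * r ^ d)).toReal := by
          rw [ENNReal.toReal_ofReal (by positivity)]
      _ ≤ (volume K).toReal := ENNReal.toReal_mono hKvol h2
  set G : ℝ → ℝ := fun r => ∫ x in U r, φ x with hG
  -- Step (i)
  have step1 : Tendsto (fun r : ℝ =>
      (r ^ d * ∑ z ∈ lattF hΩbd r, φ (ptL d r z)) - G r)
      (nhdsWithin 0 (Set.Ioi 0)) (nhds 0) := by
    rw [Metric.tendsto_nhds]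
    intro δ hδ
    set V : ℝ := (volume K).toReal + 1 with hV
    have hVpos : 0 < V := by positivity
    set θ : ℝ := δ / (2 * V) with hθ
    have hθpos : 0 < θ := by positivity
    obtain ⟨η, hη, hunif⟩ := (Metric.uniformContinuousOn_iff).1
      (hKcpt.uniformContinuousOn_of_continuous hφ.continuousOn) θ hθpos
    have hsd : Tendsto (fun r : ℝ => r * Real.sqrt d) (nhdsWithin 0 (Set.Ioi 0)) (nhds 0) := by
      have : Tendsto (fun r : ℝ => r * Real.sqrt d) (nhds 0) (nhds 0) := by
        simpa using (continuous_mul_right (Real.sqrt d)).tendsto (0:ℝ)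
      exact this.mono_left nhdsWithin_le_nhds
    have hev1 : ∀ᶠ r : ℝ in nhdsWithin 0 (Set.Ioi 0), 0 < r :=
      eventually_mem_nhdsWithin
    have hev2 : ∀ᶠ r : ℝ in nhdsWithin 0 (Set.Ioi 0),
        r * Real.sqrt d < min 1 η := hsd.eventually_lt_const (by positivity)
    filter_upwards [hev1, hev2] with r hr hrsd
    have hrsd1 : r * Real.sqrt d ≤ 1 := (hrsd.trans_le (min_le_left _ _)).le
    have hrsdη : r * Real.sqrt d < η := hrsd.trans_le (min_le_right _ _)
    -- rewrite G r as a sum of cube integrals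
    have hGsum : G r = ∑ z ∈ lattF hΩbd r, ∫ x in cube d r z, φ x := by
      rw [hG]
      exact integral_biUnion_finset (lattF hΩbd r) (fun z _ => measurableSet_cube r z)
        (hdisj r hr) (fun z hz => hφK.mono_set (cubeK r hr hrsd1 z hz))
    have key : ∀ z ∈ lattF hΩbd r,
        |r ^ d * φ (ptL d r z) - ∫ x in cube d r z, φ x| ≤ θ * r ^ d := by
      intro z hz
      have hptK : ptL d r z ∈ K := hΩK ((mem_lattF hΩbd r z).1 hz).2
      have hvol : volume (cube d r z) = ENNReal.ofReal (r ^ d) := volume_cube hr z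
      have hconst : ∫ x in cube d r z, φ (ptL d r z) = r ^ d * φ (ptL d r z) := by
        rw [setIntegral_const, measureReal_def, hvol, ENNReal.toReal_ofReal (by positivity), smul_eq_mul]
      have hint : IntegrableOn φ (cube d r z) := hφK.mono_set (cubeK r hr hrsd1 z hz)
      have hintc : IntegrableOn (fun _ => φ (ptL d r z)) (cube d r z) := by
        exact integrableOn_const (by rw [hvol]; exact ENNReal.ofReal_ne_top)
      have hsub : r ^ d * φ (ptL d r z) - ∫ x in cube d r z, φ x
          = ∫ x in cube d r z, (φ (ptL d r z) - φ x) := by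
        rw [integral_sub hintc hint, hconst]
      rw [hsub]
      have := norm_setIntegral_le_of_norm_le_const (μ := volume)
        (s := cube d r z) (f := fun x => φ (ptL d r z) - φ x) (C := θ)
        (by rw [hvol]; exact ENNReal.ofReal_lt_top)
        (fun x hx => by
          have hxK : x ∈ K := cubeK r hr hrsd1 z hz hx
          have hdist : dist x (ptL d r z) < η := (dist_le_of_mem_cube hr hx).trans_lt hrsdη
          have := hunif (ptL d r z) hptK x hxK (by rwa [dist_comm])
          rw [Real.norm_eq_abs]
          rw [Real.dist_eq] at this
          exact this.le)
      rw [Real.norm_eq_abs] at this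
      refine this.trans ?_
      rw [measureReal_def, hvol, ENNReal.toReal_ofReal (by positivity)]
    -- combine
    rw [Real.dist_eq, sub_zero, hGsum, Finset.mul_sum, ← Finset.sum_sub_distrib]
    calc |∑ z ∈ lattF hΩbd r, (r ^ d * φ (ptL d r z) - ∫ x in cube d r z, φ x)|
        ≤ ∑ z ∈ lattF hΩbd r, |r ^ d * φ (ptL d r z) - ∫ x in cube d r z, φ x| :=
          Finset.abs_sum_le_sum_abs _ _
      _ ≤ ∑ _z ∈ lattF hΩbd r, θ * r ^ d := Finset.sum_le_sum key
      _ = θ * (((lattF hΩbd r).card : ℝ) * r ^ d) := by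
          rw [Finset.sum_const, nsmul_eq_mul]; ring
      _ ≤ θ * (volume K).toReal := by
          apply mul_le_mul_of_nonneg_left (hcard r hr hrsd1) hθpos.le
      _ < δ := by
          rw [hθ]
          rw [div_mul_eq_mul_div, div_lt_iff₀ (by positivity)]
          nlinarith [ENNReal.toReal_nonneg (a := volume K)]
  -- Step (ii)
  have step2 : Tendsto G (nhdsWithin 0 (Set.Ioi 0)) (nhds (∫ x in Ω, φ x)) := by
    rw [Metric.tendsto_nhds]
    intro δ hδ
    set θ : ℝ := δ / (2 * (M + 1)) with hθ
    have hθpos : 0 < θ := by positivity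
    obtain ⟨δ₀, hδ₀, hb1, hb2⟩ := bad_small hΩopen hΩbd hΩfr
      (θ := ENNReal.ofReal θ) (by simpa using hθpos)
    have hsd : Tendsto (fun r : ℝ => r * Real.sqrt d) (nhdsWithin 0 (Set.Ioi 0)) (nhds 0) := by
      have : Tendsto (fun r : ℝ => r * Real.sqrt d) (nhds 0) (nhds 0) := by
        simpa using (continuous_mul_right (Real.sqrt d)).tendsto (0:ℝ)
      exact this.mono_left nhdsWithin_le_nhds
    have hev1 : ∀ᶠ r : ℝ in nhdsWithin 0 (Set.Ioi 0), 0 < r :=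
      eventually_mem_nhdsWithin
    have hev2 : ∀ᶠ r : ℝ in nhdsWithin 0 (Set.Ioi 0),
        r * Real.sqrt d < min 1 δ₀ := hsd.eventually_lt_const (by positivity)
    filter_upwards [hev1, hev2] with r hr hrsd
    have hrsd1 : r * Real.sqrt d ≤ 1 := (hrsd.trans_le (min_le_left _ _)).le
    have hrsdδ : r * Real.sqrt d ≤ δ₀ := (hrsd.trans_le (min_le_right _ _)).le
    have hUK' : U r ⊆ K := hUK r hr hrsd1
    -- inclusions
    have hincl1 : U r \ Ω ⊆ Metric.cthickening δ₀ Ω \ Ω := by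
      rintro x ⟨hxU, hxΩ⟩
      refine ⟨?_, hxΩ⟩
      obtain ⟨z, hz, hxz⟩ := Set.mem_iUnion₂.1 hxU
      have h1 := dist_le_of_mem_cube hr hxz
      exact Metric.mem_cthickening_of_dist_le x _ δ₀ _ ((mem_lattF hΩbd r z).1 hz).2
        (h1.trans hrsdδ)
    have hincl2 : Ω \ U r ⊆ Ω ∩ Metric.cthickening δ₀ Ωᶜ := by
      rintro x ⟨hxΩ, hxU⟩
      refine ⟨hxΩ, ?_⟩
      set z : Fin d → ℤ := fun i => ⌊x i / r⌋ with hz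
      have hxz : x ∈ cube d r z := mem_cube_floor hr x
      have hznot : z ∉ lattF hΩbd r := by
        intro hmem
        exact hxU (Set.mem_iUnion₂.2 ⟨z, hmem, hxz⟩)
      have hpt : ptL d r z ∈ Ωᶜ := by
        intro hpt
        exact hznot ((mem_lattF hΩbd r z).2 ⟨hr, hpt⟩)
      exact Metric.mem_cthickening_of_dist_le x _ δ₀ _ hpt
        ((dist_le_of_mem_cube hr hxz).trans hrsdδ)
    -- decompose the integrals
    have hintU : IntegrableOn φ (U r) := hφK.mono_set hUK'
    have hintΩ : IntegrableOn φ Ω := hφK.mono_set hΩK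
    have hdec1 : (∫ x in U r ∩ Ω, φ x) + (∫ x in U r \ Ω, φ x) = ∫ x in U r, φ x :=
      integral_inter_add_diff hΩopen.measurableSet hintU
    have hdec2 : (∫ x in Ω ∩ U r, φ x) + (∫ x in Ω \ U r, φ x) = ∫ x in Ω, φ x :=
      integral_inter_add_diff (hUmeas r) hintΩ
    have hcomm : U r ∩ Ω = Ω ∩ U r := Set.inter_comm _ _
    have hsplit : G r - ∫ x in Ω, φ x
        = (∫ x in U r \ Ω, φ x) - ∫ x in Ω \ U r, φ x := by
      rw [hG]
      simp only
      rw [← hdec1, ← hdec2, hcomm]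
      ring
    -- bound each piece
    have hbound : ∀ s : Set (EuclideanSpace ℝ (Fin d)), s ⊆ K → volume s < ENNReal.ofReal θ →
        |∫ x in s, φ x| ≤ M * θ := by
      intro s hsK hsvol
      have h1 : ‖∫ x in s, φ x‖ ≤ M * (volume s).toReal :=
        norm_setIntegral_le_of_norm_le_const
          (lt_of_lt_of_le hsvol le_top)
          (fun x hx => by rw [Real.norm_eq_abs]; exact hM x (hsK hx))
      rw [Real.norm_eq_abs] at h1
      refine h1.trans ?_
      apply mul_le_mul_of_nonneg_left _ hMpos
      have := ENNReal.toReal_mono (ENNReal.ofReal_ne_top) hsvol.le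
      rwa [ENNReal.toReal_ofReal hθpos.le] at this
    have hB1 : |∫ x in U r \ Ω, φ x| ≤ M * θ :=
      hbound _ (Set.diff_subset.trans hUK')
        (lt_of_le_of_lt (measure_mono hincl1) hb1)
    have hB2 : |∫ x in Ω \ U r, φ x| ≤ M * θ :=
      hbound _ (Set.diff_subset.trans hΩK)
        (lt_of_le_of_lt (measure_mono hincl2) hb2)
    rw [Real.dist_eq, hsplit]
    calc |(∫ x in U r \ Ω, φ x) - ∫ x in Ω \ U r, φ x|
        ≤ |∫ x in U r \ Ω, φ x| + |∫ x in Ω \ U r, φ x| := abs_sub _ _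
      _ ≤ M * θ + M * θ := add_le_add hB1 hB2
      _ < δ := by
          have h1 : (0:ℝ) < M + 1 := by linarith
          have h2 : M * (δ / (2 * (M + 1))) + M * (δ / (2 * (M + 1))) = δ * (M / (M + 1)) := by
            field_simp; ring
          rw [h2]
          calc δ * (M / (M + 1)) < δ * 1 := by
                apply mul_lt_mul_of_pos_left _ hδ
                rw [div_lt_one h1]; linarith
            _ = δ := mul_one δ
  -- combine
  have := step1.add step2
  rw [zero_add] at this
  refine this.congr fun r => ?_
  ring


lemma pow_sub_pow_le_real : ∀ (n : ℕ) {a b : ℝ}, 0 ≤ b → b ≤ a →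
    a ^ n - b ^ n ≤ n * (a - b) * a ^ (n - 1) := by
  intro n
  induction n with
  | zero => intro a b hb hab; simp
  | succ n ih =>
    intro a b hb hab
    have ha : 0 ≤ a := hb.trans hab
    rcases Nat.eq_zero_or_pos n with hn | hn
    · subst hn; simp
    · have h1 : a ^ (n + 1) - b ^ (n + 1) = a * (a ^ n - b ^ n) + (a - b) * b ^ n := by ring
      have h2 := ih hb hab
      have h3 : a * (a ^ n - b ^ n) ≤ a * (n * (a - b) * a ^ (n - 1)) :=
        mul_le_mul_of_nonneg_left h2 ha
      have h4 : a * (n * (a - b) * a ^ (n - 1)) = n * (a - b) * a ^ n := by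
        rw [show a * (n * (a - b) * a ^ (n - 1)) = n * (a - b) * (a * a ^ (n - 1)) by ring,
          ← pow_succ']
        congr 2
        omega
      have h5 : (a - b) * b ^ n ≤ (a - b) * a ^ n :=
        mul_le_mul_of_nonneg_left (pow_le_pow_left₀ hb hab n) (by linarith)
      have h6 : ((n:ℝ) + 1) * (a - b) * a ^ (n + 1 - 1) = n * (a - b) * a ^ n + (a - b) * a ^ n := by
        simp; ring
      push_cast
      rw [h6.symm] at *
      push_cast at h6 ⊢
      nlinarith [h3, h5, h1]

/-- The cube `[-m,m]^d ∩ ℤ^d` as a finset. -/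
def boxZ (d m : ℕ) : Finset (Fin d → ℤ) := Fintype.piFinset fun _ => Finset.Icc (-(m:ℤ)) m

lemma card_boxZ (m : ℕ) : (boxZ d m).card = (2 * m + 1) ^ d := by
  rw [boxZ, Fintype.card_piFinset]
  have : (Finset.Icc (-(m:ℤ)) m).card = 2 * m + 1 := by
    rw [Int.card_Icc]
    omega
  simp [this]

lemma boxZ_mono {m m' : ℕ} (h : m ≤ m') : boxZ d m ⊆ boxZ d m' := by
  intro z hz
  simp only [boxZ, Fintype.mem_piFinset, Finset.mem_Icc] at *
  intro i
  have := hz i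
  omega

def shellZ (d k : ℕ) : Finset (Fin d → ℤ) := boxZ d (k + 1) \ boxZ d k

lemma card_shellZ_le (hd : 0 < d) (k : ℕ) :
    ((shellZ d k).card : ℝ) ≤ (2 * d * 3 ^ (d - 1)) * ((k:ℝ) + 1) ^ (d - 1) := by
  have h1 : (shellZ d k).card = (2 * (k+1) + 1) ^ d - (2 * k + 1) ^ d := by
    rw [shellZ, Finset.card_sdiff_of_subset (boxZ_mono (Nat.le_succ k)), card_boxZ, card_boxZ]
  have h2 : ((2 * k + 1) ^ d : ℕ) ≤ ((2 * (k+1) + 1) ^ d : ℕ) :=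
    Nat.pow_le_pow_left (by omega) d
  have h3 : ((shellZ d k).card : ℝ) = ((2 * (k:ℝ) + 3)) ^ d - (2 * (k:ℝ) + 1) ^ d := by
    rw [h1, Nat.cast_sub h2]
    push_cast
    ring_nf
  rw [h3]
  have h4 := pow_sub_pow_le_real d (a := 2 * (k:ℝ) + 3) (b := 2 * (k:ℝ) + 1)
    (by positivity) (by linarith)
  refine h4.trans ?_
  have h5 : (2 * (k:ℝ) + 3) - (2 * (k:ℝ) + 1) = 2 := by ring
  rw [h5]
  have h6 : (2 * (k:ℝ) + 3) ^ (d - 1) ≤ (3 * ((k:ℝ) + 1)) ^ (d - 1) :=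
    pow_le_pow_left₀ (by positivity) (by linarith) _
  calc (d:ℝ) * 2 * (2 * (k:ℝ) + 3) ^ (d - 1)
      ≤ (d:ℝ) * 2 * (3 * ((k:ℝ) + 1)) ^ (d - 1) := by
        apply mul_le_mul_of_nonneg_left h6 (by positivity)
    _ = (2 * d * 3 ^ (d - 1)) * ((k:ℝ) + 1) ^ (d - 1) := by
        rw [mul_pow]; ring

lemma msup_mem_shell {z : Fin d → ℤ} (hd : 0 < d) (hz : z ≠ 0) :
    ∃ k : ℕ, z ∈ shellZ d k ∧ ∃ i, (z i).natAbs = k + 1 := by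
  set m : ℕ := Finset.univ.sup fun i => (z i).natAbs with hm
  have hne : (Finset.univ : Finset (Fin d)).Nonempty := by
    rw [Finset.univ_nonempty_iff]
    exact Fin.pos_iff_nonempty.1 hd
  obtain ⟨i, -, hi⟩ := Finset.exists_mem_eq_sup Finset.univ hne fun i => (z i).natAbs
  have hle : ∀ j, (z j).natAbs ≤ m :=
    fun j => Finset.le_sup (f := fun i => (z i).natAbs) (Finset.mem_univ j)
  have hm1 : 1 ≤ m := by
    by_contra h
    push_neg at h
    interval_cases m
    · apply hz
      funext j
      have := hle j
      simp only [Pi.zero_apply]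
      omega
  refine ⟨m - 1, ?_, ⟨i, by omega⟩⟩
  rw [shellZ, Finset.mem_sdiff]
  constructor
  · simp only [boxZ, Fintype.mem_piFinset, Finset.mem_Icc]
    intro j
    have := hle j
    have : m - 1 + 1 = m := by omega
    have := hle j
    omega
  · simp only [boxZ, Fintype.mem_piFinset, Finset.mem_Icc, not_forall]
    refine ⟨i, ?_⟩
    have : (z i).natAbs = m := hi.symm
    omega

lemma LamZ_aux_ne_top (hd : 0 < d) {ℓ : ℝ → ℝ≥0∞} {r₀ c : ℝ} (hr₀ : 0 < r₀)
    (hfin : ∀ r ≥ r₀, ℓ r ≠ ⊤) (hanti : AntitoneOn ℓ (Set.Ici r₀))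
    (hint : ∫⁻ t in Set.Ioi r₀, ℓ t * ENNReal.ofReal (t ^ (d - 1)) ≠ ⊤)
    (hc : r₀ ≤ c) :
    (∑' z : {z : Fin d → ℤ // z ≠ 0}, ℓ (c * ‖vecZ d z.1‖)) ≠ ⊤ := by
  classical
  have hc0 : 0 < c := hr₀.trans_le hc
  have hck : ∀ x : ℝ, 1 ≤ x → r₀ ≤ c * x := by
    intro x hx
    calc r₀ ≤ c := hc
      _ = c * 1 := (mul_one c).symm
      _ ≤ c * x := mul_le_mul_of_nonneg_left hx hc0.le
  set g : ℕ → ℝ≥0∞ := fun k => ℓ (c * ((k:ℝ) + 1)) with hg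
  -- bound each term by the shell value
  have hterm : ∀ z : {z : Fin d → ℤ // z ≠ 0}, ∀ k : ℕ, z.1 ∈ shellZ d k →
      (∃ i, (z.1 i).natAbs = k + 1) → ℓ (c * ‖vecZ d z.1‖) ≤ g k := by
    rintro z k hzk ⟨i, hi⟩
    have h1 : ((k:ℝ) + 1) ≤ ‖vecZ d z.1‖ := by
      have h2 := abs_coord_le_norm (vecZ d z.1) i
      have h3 : |(vecZ d z.1) i| = ((z.1 i).natAbs : ℝ) := by
        show |((z.1 i : ℤ) : ℝ)| = _
        rw [← Int.cast_abs]
        congr 1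
        exact_mod_cast (Int.abs_eq_natAbs _)
      rw [h3, hi] at h2
      exact_mod_cast h2
    have hk1 : (1:ℝ) ≤ (k:ℝ) + 1 := by push_cast; linarith [Nat.cast_nonneg (α := ℝ) k]
    apply hanti
    · exact Set.mem_Ici.2 (hck _ hk1)
    · exact Set.mem_Ici.2 (hck _ (hk1.trans h1))
    · exact mul_le_mul_of_nonneg_left h1 hc0.le
  -- the sigma-type injection
  have hsum1 : (∑' z : {z : Fin d → ℤ // z ≠ 0}, ℓ (c * ‖vecZ d z.1‖))
      ≤ ∑' k : ℕ, ((shellZ d k).card : ℝ≥0∞) * g k := by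
    set F : {z : Fin d → ℤ // z ≠ 0} → (Σ k : ℕ, {w // w ∈ shellZ d k}) := fun z =>
      ⟨(msup_mem_shell hd z.2).choose, ⟨z.1, (msup_mem_shell hd z.2).choose_spec.1⟩⟩ with hF
    have hFinj : Function.Injective F := by
      intro z w h
      apply Subtype.ext
      exact congrArg (fun p : (Σ k : ℕ, {w // w ∈ shellZ d k}) => p.2.1) h
    calc (∑' z : {z : Fin d → ℤ // z ≠ 0}, ℓ (c * ‖vecZ d z.1‖))
        ≤ ∑' z : {z : Fin d → ℤ // z ≠ 0}, g ((F z).1) := by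
          apply ENNReal.tsum_le_tsum
          intro z
          exact hterm z _ (msup_mem_shell hd z.2).choose_spec.1
            (msup_mem_shell hd z.2).choose_spec.2
      _ ≤ ∑' p : (Σ k : ℕ, {w // w ∈ shellZ d k}), g p.1 :=
          ENNReal.tsum_comp_le_tsum_of_injective hFinj _
      _ = ∑' k : ℕ, ∑' _w : {w // w ∈ shellZ d k}, g k :=
          ENNReal.tsum_sigma (fun k (_ : {w // w ∈ shellZ d k}) => g k)
      _ = ∑' k : ℕ, ((shellZ d k).card : ℝ≥0∞) * g k := by
          congr 1
          funext k
          rw [tsum_fintype]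
          rw [Finset.sum_const, Finset.card_univ, Fintype.card_coe, nsmul_eq_mul]
  -- per-shell bound against the integral
  set I : ℕ → Set ℝ := fun k => Set.Ioc (c * ((k:ℝ) + 1)) (c * ((k:ℝ) + 2)) with hI
  have hIsub : ∀ k, I k ⊆ Set.Ioi r₀ := by
    intro k t ht
    rw [Set.mem_Ioi]
    refine lt_of_le_of_lt (hck ((k:ℝ)+1) (by push_cast; linarith [Nat.cast_nonneg (α := ℝ) k])) ht.1
  have hIdisj : Pairwise (Function.onFun Disjoint I) := by
    intro k l hkl
    rw [Function.onFun, hI]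
    simp only
    rw [Set.Ioc_disjoint_Ioc]
    rcases hkl.lt_or_gt with h | h
    · refine le_trans (min_le_left _ _) (le_trans ?_ (le_max_right _ _))
      apply mul_le_mul_of_nonneg_left _ hc0.le
      have : (k:ℝ) + 1 ≤ l := by exact_mod_cast Nat.succ_le_of_lt h
      linarith
    · refine le_trans (min_le_right _ _) (le_trans ?_ (le_max_left _ _))
      apply mul_le_mul_of_nonneg_left _ hc0.le
      have : (l:ℝ) + 1 ≤ k := by exact_mod_cast Nat.succ_le_of_lt h
      linarith
  have hIineq : ∀ k : ℕ,
      ℓ (c * ((k:ℝ) + 2)) * ENNReal.ofReal ((c * ((k:ℝ) + 1)) ^ (d-1)) * ENNReal.ofReal c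
      ≤ ∫⁻ t in I k, ℓ t * ENNReal.ofReal (t ^ (d - 1)) := by
    intro k
    have h1 : ∫⁻ t in I k, (ℓ (c * ((k:ℝ) + 2)) * ENNReal.ofReal ((c * ((k:ℝ) + 1)) ^ (d-1)))
        = ℓ (c * ((k:ℝ) + 2)) * ENNReal.ofReal ((c * ((k:ℝ) + 1)) ^ (d-1)) * volume (I k) :=
      setLIntegral_const _ _
    have h2 : volume (I k) = ENNReal.ofReal c := by
      rw [hI]
      simp only [Real.volume_Ioc]
      congr 1
      ring
    rw [← h2, ← h1]
    apply lintegral_mono_ae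
    rw [ae_restrict_iff' measurableSet_Ioc]
    apply ae_of_all
    intro t ht
    have htr : r₀ < t := hIsub k ht
    apply mul_le_mul'
    · exact hanti (Set.mem_Ici.2 htr.le)
        (Set.mem_Ici.2 (hck _ (by push_cast; linarith [Nat.cast_nonneg (α := ℝ) k]))) ht.2
    · apply ENNReal.ofReal_le_ofReal
      exact pow_le_pow_left₀ (by positivity) ht.1.le _
  -- the tail sum is finite
  set D : ℝ≥0∞ := ENNReal.ofReal (2 ^ (d-1) / c ^ (d-1)) * (ENNReal.ofReal c)⁻¹ with hD
  have hDne : D ≠ ⊤ := by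
    rw [hD]
    apply ENNReal.mul_ne_top ENNReal.ofReal_ne_top
    simp only [ne_eq, ENNReal.inv_eq_top]
    rw [← ne_eq, ← pos_iff_ne_zero]
    exact ENNReal.ofReal_pos.2 hc0
  have htail : ∀ k : ℕ, ENNReal.ofReal (((k:ℝ) + 2) ^ (d-1)) * ℓ (c * ((k:ℝ) + 2))
      ≤ D * ∫⁻ t in I k, ℓ t * ENNReal.ofReal (t ^ (d - 1)) := by
    intro k
    have h1 : ((k:ℝ) + 2) ^ (d-1) ≤ (2 ^ (d-1) / c ^ (d-1)) * (c * ((k:ℝ) + 1)) ^ (d-1) := by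
      have hh : (2 ^ (d-1) / c ^ (d-1)) * (c * ((k:ℝ) + 1)) ^ (d-1)
          = (2 * ((k:ℝ) + 1)) ^ (d-1) := by
        rw [mul_pow, mul_pow]
        field_simp
      rw [hh]
      exact pow_le_pow_left₀ (by positivity) (by linarith [Nat.cast_nonneg (α := ℝ) k]) _
    have hcc : (ENNReal.ofReal c)⁻¹ * ENNReal.ofReal c = 1 := by
      rw [ENNReal.inv_mul_cancel]
      · exact (ENNReal.ofReal_pos.2 hc0).ne'
      · exact ENNReal.ofReal_ne_top
    calc ENNReal.ofReal (((k:ℝ) + 2) ^ (d-1)) * ℓ (c * ((k:ℝ) + 2))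
        ≤ (ENNReal.ofReal ((2 ^ (d-1) / c ^ (d-1)) * (c * ((k:ℝ) + 1)) ^ (d-1))) * ℓ (c * ((k:ℝ) + 2)) :=
          mul_le_mul_left (ENNReal.ofReal_le_ofReal h1) _
      _ = ENNReal.ofReal (2 ^ (d-1) / c ^ (d-1)) * ((ENNReal.ofReal c)⁻¹ * ENNReal.ofReal c) *
            (ENNReal.ofReal ((c * ((k:ℝ) + 1)) ^ (d-1)) * ℓ (c * ((k:ℝ) + 2))) := by
          rw [hcc, mul_one, ENNReal.ofReal_mul (by positivity)]
          ring
      _ = D * (ℓ (c * ((k:ℝ) + 2)) * ENNReal.ofReal ((c * ((k:ℝ) + 1)) ^ (d-1)) * ENNReal.ofReal c) := by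
          rw [hD]; ring
      _ ≤ D * ∫⁻ t in I k, ℓ t * ENNReal.ofReal (t ^ (d - 1)) :=
          mul_le_mul_right (hIineq k) D
  -- assemble
  have hS : (∑' k : ℕ, ENNReal.ofReal (((k:ℝ) + 1) ^ (d-1)) * g k) ≠ ⊤ := by
    rw [tsum_eq_zero_add' ENNReal.summable]
    apply ENNReal.add_ne_top.2
    constructor
    · simp only [hg, Nat.cast_zero, zero_add, one_pow, ENNReal.ofReal_one, one_mul, mul_one]
      exact hfin c hc
    · have hle2 : (∑' k : ℕ, ENNReal.ofReal (((↑(k+1):ℝ) + 1) ^ (d-1)) * g (k+1))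
          ≤ D * ∫⁻ t in Set.Ioi r₀, ℓ t * ENNReal.ofReal (t ^ (d-1)) := by
        calc (∑' k : ℕ, ENNReal.ofReal (((↑(k+1):ℝ) + 1) ^ (d-1)) * g (k+1))
            ≤ ∑' k : ℕ, D * ∫⁻ t in I k, ℓ t * ENNReal.ofReal (t ^ (d - 1)) := by
              apply ENNReal.tsum_le_tsum
              intro k
              have hcast : ((↑(k+1):ℝ) + 1) = (k:ℝ) + 2 := by push_cast; ring
              have harg : c * ((↑(k+1):ℝ) + 1) = c * ((k:ℝ) + 2) := by push_cast; ring
              have hgk : g (k+1) = ℓ (c * ((k:ℝ) + 2)) := by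
                simp only [hg, harg]
              rw [hcast, hgk]
              exact htail k
          _ = D * ∑' k : ℕ, ∫⁻ t in I k, ℓ t * ENNReal.ofReal (t ^ (d - 1)) :=
              ENNReal.tsum_mul_left
          _ ≤ D * ∫⁻ t in Set.Ioi r₀, ℓ t * ENNReal.ofReal (t ^ (d-1)) := by
              apply mul_le_mul_right
              rw [← lintegral_iUnion (fun k => measurableSet_Ioc) hIdisj]
              exact lintegral_mono_set (Set.iUnion_subset hIsub)
      exact (hle2.trans_lt (ENNReal.mul_lt_top hDne.lt_top hint.lt_top)).ne
  have hfinal : (∑' z : {z : Fin d → ℤ // z ≠ 0}, ℓ (c * ‖vecZ d z.1‖))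
      ≤ ENNReal.ofReal (2 * d * 3 ^ (d-1)) * ∑' k : ℕ, ENNReal.ofReal (((k:ℝ) + 1) ^ (d-1)) * g k := by
    refine hsum1.trans ?_
    rw [← ENNReal.tsum_mul_left]
    apply ENNReal.tsum_le_tsum
    intro k
    calc ((shellZ d k).card : ℝ≥0∞) * g k
        ≤ ENNReal.ofReal ((2 * d * 3 ^ (d-1)) * ((k:ℝ) + 1) ^ (d-1)) * g k := by
          apply mul_le_mul_left
          rw [← ENNReal.ofReal_natCast]
          exact ENNReal.ofReal_le_ofReal (card_shellZ_le hd k)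
      _ = ENNReal.ofReal (2 * d * 3 ^ (d-1)) * (ENNReal.ofReal (((k:ℝ) + 1) ^ (d-1)) * g k) := by
          rw [ENNReal.ofReal_mul (by positivity), mul_assoc]
  exact (hfinal.trans_lt (ENNReal.mul_lt_top ENNReal.ofReal_lt_top hS.lt_top)).ne


lemma LamZ_eq (ℓ : ℝ → ℝ≥0∞) (r : ℝ) :
    LamZ d ℓ r = ∑' z : {z : Fin d → ℤ // z ≠ 0}, ℓ (r * ‖vecZ d z.1‖) := rfl

lemma xi_image_le {Ω : Set (EuclideanSpace ℝ (Fin d))} (hΩbd : IsBounded Ω)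
    {ε c : ℝ} (hε : 0 < ε) (hc0 : 0 < c) (ℓ : ℝ → ℝ≥0∞) :
    xi (fun t => ℓ (t / ε)) ((lattF hΩbd (ε * c)).image (ptL d (ε * c)))
      ≤ (lattF (Ω := Ω) hΩbd (ε * c)).card • LamZ d ℓ c := by
  classical
  have hrc : (0:ℝ) < ε * c := mul_pos hε hc0
  have hinj : Function.Injective (ptL d (ε * c)) := ptL_injective hrc.ne'
  set L := lattF (Ω := Ω) hΩbd (ε * c) with hL
  have hdist : ∀ z w : Fin d → ℤ,
      dist (ptL d (ε * c) z) (ptL d (ε * c) w) / ε = c * ‖vecZ d (z - w)‖ := by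
    intro z w
    rw [dist_ptL, abs_of_pos hrc]
    field_simp
  rw [xi]
  rw [Finset.sum_image (fun x _ y _ h => hinj h)]
  have hinner : ∀ z ∈ L,
      (∑ y ∈ L.image (ptL d (ε * c)),
        if ptL d (ε * c) z ≠ y then ℓ (dist (ptL d (ε * c) z) y / ε) else 0)
      ≤ LamZ d ℓ c := by
    intro z hz
    rw [Finset.sum_image (fun x _ y _ h => hinj h)]
    set H : (Fin d → ℤ) → ℝ≥0∞ := fun v => if v ≠ 0 then ℓ (c * ‖vecZ d v‖) else 0 with hH
    have hterm : ∀ w ∈ L,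
        (if ptL d (ε * c) z ≠ ptL d (ε * c) w
          then ℓ (dist (ptL d (ε * c) z) (ptL d (ε * c) w) / ε) else 0)
        = H (z - w) := by
      intro w hw
      by_cases hzw : z = w
      · subst hzw
        simp [hH]
      · have h1 : ptL d (ε * c) z ≠ ptL d (ε * c) w := fun h => hzw (hinj h)
        have h2 : z - w ≠ 0 := sub_ne_zero.2 hzw
        rw [if_pos h1, hH]
        simp only [h2, ne_eq, not_false_eq_true, if_true]
        rw [hdist]
    rw [Finset.sum_congr rfl hterm]
    have hsubinj : ∀ x ∈ L, ∀ y ∈ L, z - x = z - y → x = y := by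
      intro x _ y _ h
      have h2 : -x = -y := by
        have := congrArg (fun u => u - z) h
        simpa [sub_sub_eq_add_sub] using this
      simpa using congrArg Neg.neg h2
    rw [← Finset.sum_image (g := fun w => z - w) (f := H) hsubinj]
    refine le_trans (ENNReal.sum_le_tsum _) (le_of_eq ?_)
    calc ∑' v : Fin d → ℤ, H v
        = ∑' v : Fin d → ℤ,
            ({v : Fin d → ℤ | v ≠ 0}).indicator (fun v => ℓ (c * ‖vecZ d v‖)) v := by
          apply tsum_congr
          intro v
          rw [hH]
          by_cases hv : v ≠ 0
          · simp [Set.indicator, hv]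
          · simp [Set.indicator, hv]
      _ = LamZ d ℓ c :=
          (tsum_subtype {v : Fin d → ℤ | v ≠ 0} (fun v => ℓ (c * ‖vecZ d v‖))).symm
  calc ∑ z ∈ L, (∑ y ∈ L.image (ptL d (ε * c)),
        if ptL d (ε * c) z ≠ y then ℓ (dist (ptL d (ε * c) z) y / ε) else 0)
      ≤ ∑ _z ∈ L, LamZ d ℓ c := Finset.sum_le_sum hinner
    _ = L.card • LamZ d ℓ c := Finset.sum_const _

end RecAux

open RecAux Bornology

/-- Recovery sequences for uniform densities: for every `a ∈ [0, r₀^{-d}]` there are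
finite sets `S_ε ⊆ closure Ω` whose `ε`-scaled empirical measures converge weakly* to
`a 𝓛^d ⌞ Ω` and whose scaled energies `F_ε(ρ_ε) = ε^d ξ_{ℓ,ε}(S_ε)` satisfy
`limsup_{ε→0} F_ε(ρ_ε) ≤ a Λ_ℓ(a^{-1/d}) |Ω| < ∞`.
(The regularity of the domain `Ω` is expressed, as used in the paper, by `Ω` being
open, bounded and with Lebesgue-negligible boundary.) -/
theorem recovery_sequence_uniform_density {d : ℕ} (hd : 0 < d)
    (ℓ : ℝ → ℝ≥0∞) (r₀ : ℝ) (hr₀ : 0 < r₀)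
    (hlsc : LowerSemicontinuous ℓ) (h0 : 0 < ℓ 0)
    (hfin : ∀ r ≥ r₀, ℓ r ≠ ⊤) (hanti : AntitoneOn ℓ (Set.Ici r₀))
    (hlim : Tendsto ℓ atTop (nhds 0))
    (hint : ∫⁻ t in Set.Ioi r₀, ℓ t * ENNReal.ofReal (t ^ (d - 1)) ≠ ⊤)
    (Ω : Set (EuclideanSpace ℝ (Fin d))) (hΩopen : IsOpen Ω)
    (hΩbd : Bornology.IsBounded Ω) (hΩne : Ω.Nonempty)
    (hΩfr : volume (frontier Ω) = 0)
    (a : ℝ) (ha : a ∈ Set.Icc 0 (r₀ ^ d)⁻¹) :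
    ∃ S : ℝ → Finset (EuclideanSpace ℝ (Fin d)),
      (∀ ε > (0:ℝ), ↑(S ε) ⊆ closure Ω) ∧
      (∀ φ : EuclideanSpace ℝ (Fin d) → ℝ, Continuous φ →
        Tendsto (fun ε : ℝ => ε ^ d * ∑ x ∈ S ε, φ x)
          (nhdsWithin 0 (Set.Ioi 0)) (nhds (a * ∫ x in Ω, φ x))) ∧
      Filter.limsup
          (fun ε : ℝ => ENNReal.ofReal (ε ^ d) * xi (fun r => ℓ (r / ε)) (S ε))
          (nhdsWithin 0 (Set.Ioi 0))
        ≤ ENNReal.ofReal a * LamZ d ℓ (a ^ (-(1:ℝ)/d)) * volume Ω ∧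
      ENNReal.ofReal a * LamZ d ℓ (a ^ (-(1:ℝ)/d)) * volume Ω ≠ ⊤ := by
  classical
  obtain ⟨ha0, ha1⟩ := ha
  rcases eq_or_lt_of_le ha0 with h0a | hapos
  · -- the case a = 0 : take empty configurations
    refine ⟨fun _ => ∅, ?_, ?_, ?_, ?_⟩
    · intro ε _
      simp
    · intro φ hφ
      simp only [Finset.sum_empty, mul_zero, ← h0a, zero_mul]
      exact tendsto_const_nhds
    · have hzero : (fun ε : ℝ => ENNReal.ofReal (ε ^ d) *
          xi (fun r => ℓ (r / ε)) (∅ : Finset (EuclideanSpace ℝ (Fin d)))) = fun _ => 0 := by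
        funext ε
        simp [xi]
      rw [hzero]
      simp only [limsup_const]
      exact zero_le
    · rw [← h0a]
      simp
  · -- the case a > 0 : scaled lattice configurations
    set c : ℝ := a ^ (-(1:ℝ)/d) with hc
    have hdne : (d:ℝ) ≠ 0 := Nat.cast_ne_zero.2 hd.ne'
    have hc0 : 0 < c := Real.rpow_pos_of_pos hapos _
    have hcinv : c = (a⁻¹) ^ ((1:ℝ)/d) := by
      rw [hc, neg_div, Real.rpow_neg hapos.le, ← Real.inv_rpow hapos.le]
    have h1 : r₀ ^ d ≤ a⁻¹ := by
      rw [← inv_inv (r₀ ^ d)]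
      exact inv_anti₀ hapos ha1
    have hcr : r₀ ≤ c := by
      have h2 : ((r₀ ^ d : ℝ)) ^ ((1:ℝ)/d) = r₀ := by
        rw [← Real.rpow_natCast r₀ d, ← Real.rpow_mul hr₀.le, mul_one_div,
          div_self hdne, Real.rpow_one]
      calc r₀ = ((r₀ ^ d : ℝ)) ^ ((1:ℝ)/d) := h2.symm
        _ ≤ (a⁻¹) ^ ((1:ℝ)/d) := Real.rpow_le_rpow (by positivity) h1 (by positivity)
        _ = c := hcinv.symm
    have hacd : a * c ^ d = 1 := by
      have h3 : c ^ d = a⁻¹ := by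
        rw [hcinv, ← Real.rpow_natCast ((a⁻¹) ^ ((1:ℝ)/d)) d,
          ← Real.rpow_mul (by positivity), one_div, inv_mul_cancel₀ hdne, Real.rpow_one]
      rw [h3, mul_inv_cancel₀ hapos.ne']
    have hΛ : LamZ d ℓ c ≠ ⊤ := by
      rw [LamZ_eq]
      exact LamZ_aux_ne_top hd hr₀ hfin hanti hint hcr
    have hvol : volume Ω ≠ ⊤ := (vol_bounded_lt_top hΩbd).ne
    set S : ℝ → Finset (EuclideanSpace ℝ (Fin d)) :=
      fun ε => (lattF hΩbd (ε * c)).image (ptL d (ε * c)) with hS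
    -- weak-* convergence
    have hweak : ∀ φ : EuclideanSpace ℝ (Fin d) → ℝ, Continuous φ →
        Tendsto (fun ε : ℝ => ε ^ d * ∑ x ∈ S ε, φ x)
          (nhdsWithin 0 (Set.Ioi 0)) (nhds (a * ∫ x in Ω, φ x)) := by
      intro φ hφ
      have hkey := riemann hΩopen hΩbd hΩfr φ hφ
      have hmul : Tendsto (fun ε : ℝ => ε * c) (nhdsWithin 0 (Set.Ioi 0))
          (nhdsWithin 0 (Set.Ioi 0)) := by
        apply tendsto_nhdsWithin_of_tendsto_nhds_of_eventually_within
        · have h4 : Tendsto (fun ε : ℝ => ε * c) (nhds 0) (nhds 0) := by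
            simpa using (continuous_mul_right c).tendsto (0:ℝ)
          exact h4.mono_left nhdsWithin_le_nhds
        · filter_upwards [eventually_mem_nhdsWithin] with ε hε
          exact Set.mem_Ioi.2 (mul_pos hε hc0)
      have h2 := (hkey.comp hmul).const_mul a
      apply h2.congr'
      filter_upwards [eventually_mem_nhdsWithin] with ε hε
      have hεpos : (0:ℝ) < ε := hε
      have hrc : (0:ℝ) < ε * c := mul_pos hεpos hc0
      show a * ((ε * c) ^ d * ∑ z ∈ lattF hΩbd (ε * c), φ (ptL d (ε * c) z))
          = ε ^ d * ∑ x ∈ S ε, φ x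
      rw [hS]
      simp only
      rw [Finset.sum_image (fun x _ y _ h => ptL_injective hrc.ne' h), mul_pow]
      set T := ∑ z ∈ lattF hΩbd (ε * c), φ (ptL d (ε * c) z) with hT
      rw [show a * (ε ^ d * c ^ d * T) = (a * c ^ d) * (ε ^ d * T) from by ring, hacd,
        one_mul]
    refine ⟨S, ?_, hweak, ?_, ?_⟩
    · intro ε _ x hx
      simp only [hS, Finset.coe_image, Set.mem_image, Finset.mem_coe] at hx
      obtain ⟨z, hz, rfl⟩ := hx
      exact subset_closure ((mem_lattF hΩbd _ z).1 hz).2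
    · -- the limsup bound
      have hcard := hweak (fun _ => (1:ℝ)) continuous_const
      have hint1 : (∫ _x in Ω, (1:ℝ)) = (volume Ω).toReal := by
        rw [setIntegral_const, smul_eq_mul, mul_one, measureReal_def]
      rw [hint1] at hcard
      have hcard2 : Tendsto (fun ε : ℝ => ε ^ d * ∑ _x ∈ S ε, (1:ℝ))
          (nhdsWithin 0 (Set.Ioi 0)) (nhds (a * (volume Ω).toReal)) := hcard
      have htendE : Tendsto
          (fun ε : ℝ => ENNReal.ofReal (ε ^ d * ∑ _x ∈ S ε, (1:ℝ)) * LamZ d ℓ c)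
          (nhdsWithin 0 (Set.Ioi 0))
          (nhds (ENNReal.ofReal (a * (volume Ω).toReal) * LamZ d ℓ c)) :=
        ENNReal.Tendsto.mul_const (ENNReal.tendsto_ofReal hcard2) (Or.inr hΛ)
      have hbound : ∀ᶠ ε : ℝ in nhdsWithin 0 (Set.Ioi 0),
          ENNReal.ofReal (ε ^ d) * xi (fun r => ℓ (r / ε)) (S ε)
          ≤ ENNReal.ofReal (ε ^ d * ∑ _x ∈ S ε, (1:ℝ)) * LamZ d ℓ c := by
        filter_upwards [eventually_mem_nhdsWithin] with ε hε
        have hεpos : (0:ℝ) < ε := hε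
        have h5 : xi (fun r => ℓ (r / ε)) (S ε)
            ≤ (lattF (Ω := Ω) hΩbd (ε * c)).card • LamZ d ℓ c :=
          xi_image_le hΩbd hεpos hc0 ℓ
        have hcards : (∑ _x ∈ S ε, (1:ℝ)) = ((lattF (Ω := Ω) hΩbd (ε * c)).card : ℝ) := by
          rw [hS]
          simp only
          rw [Finset.sum_const,
            Finset.card_image_of_injective _ (ptL_injective (mul_pos hεpos hc0).ne'),
            nsmul_eq_mul, mul_one]
        calc ENNReal.ofReal (ε ^ d) * xi (fun r => ℓ (r / ε)) (S ε)
            ≤ ENNReal.ofReal (ε ^ d) * ((lattF (Ω := Ω) hΩbd (ε * c)).card • LamZ d ℓ c) :=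
              mul_le_mul_right h5 _
          _ = ENNReal.ofReal (ε ^ d * ∑ _x ∈ S ε, (1:ℝ)) * LamZ d ℓ c := by
              rw [hcards, nsmul_eq_mul, ENNReal.ofReal_mul (by positivity),
                ENNReal.ofReal_natCast, mul_assoc]
      calc Filter.limsup
            (fun ε : ℝ => ENNReal.ofReal (ε ^ d) * xi (fun r => ℓ (r / ε)) (S ε))
            (nhdsWithin 0 (Set.Ioi 0))
          ≤ Filter.limsup
            (fun ε : ℝ => ENNReal.ofReal (ε ^ d * ∑ _x ∈ S ε, (1:ℝ)) * LamZ d ℓ c)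
            (nhdsWithin 0 (Set.Ioi 0)) := limsup_le_limsup hbound
        _ = ENNReal.ofReal (a * (volume Ω).toReal) * LamZ d ℓ c := htendE.limsup_eq
        _ = ENNReal.ofReal a * LamZ d ℓ c * volume Ω := by
            rw [ENNReal.ofReal_mul ha0, ENNReal.ofReal_toReal hvol]
            ring
    · exact ENNReal.mul_ne_top (ENNReal.mul_ne_top ENNReal.ofReal_ne_top hΛ) hvol
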